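/- arXiv:1201.4357 — 7 statements merged into one kernel-verified Lean document; each statement's English description precedes it below -/
import Mathlib

section
/- Let M be an artinian monomial ideal in K[x_1,...,x_m] and define the rank of a monomial x^b as one less than the minimum degree of a monomial x^a such that x^b lies in the principal ideal (x^a) but not in x^a·M. Then rank(x^b) equals min over socle monomials x^c of M of degree^+(b−c) minus 1, where degree^+(u) = sum of the positive coordinates of u, and the socle monomials are the monomials x^c not in M such that x_i·x^c ∈ M for all i. -/
open Finset

/-- A set of exponent vectors is a monomial ideal iff it is upward closed. -/
def UpClosed {m : ℕ} (M : Set (Fin m → ℕ)) : Prop :=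
  ∀ u ∈ M, ∀ v : Fin m → ℕ, (∀ i, u i ≤ v i) → v ∈ M

/-- Artinian: a power of each variable lies in `M`. -/
def ArtinianMono {m : ℕ} (M : Set (Fin m → ℕ)) : Prop :=
  ∀ i : Fin m, ∃ k : ℕ, (fun j => if j = i then k else 0) ∈ M

/-- Socle monomials: `x^c ∉ M` with `x_i·x^c ∈ M` for all `i`. -/
def MonSoc {m : ℕ} (M : Set (Fin m → ℕ)) : Set (Fin m → ℕ) :=
  {c | c ∉ M ∧ ∀ i : Fin m, (fun j => c j + if j = i then 1 else 0) ∈ M}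

/-- `degree⁺(u)`: the sum of the positive coordinates of `u`. -/
def degP {m : ℕ} (w : Fin m → ℤ) : ℤ := ∑ i, max (w i) 0

/-- total degree -/
def degZ {m : ℕ} (w : Fin m → ℤ) : ℤ := ∑ i, w i

def zvec {m : ℕ} (b : Fin m → ℕ) : Fin m → ℤ := fun i => (b i : ℤ)

/-- rank of a Laurent monomial `x^b` with respect to `M`. -/
noncomputable def rnk {m : ℕ} (M : Set (Fin m → ℕ)) (b : Fin m → ℤ) : ℤ :=
  sInf ((fun c => degP (b - zvec c)) '' MonSoc M) - 1

/-- `M` is level of genus `g`: all socle monomials have degree `g - 1`. -/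
def LevelOf {m : ℕ} (M : Set (Fin m → ℕ)) (g : ℤ) : Prop :=
  ∀ c ∈ MonSoc M, degZ (zvec c) = g - 1

/-- Reflection invariance with canonical monomial `x^K`. -/
def ReflInv {m : ℕ} (M : Set (Fin m → ℕ)) (K : Fin m → ℕ) : Prop :=
  ∀ c ∈ MonSoc M, (∀ i, c i ≤ K i) ∧ (fun i => K i - c i) ∈ MonSoc M

/-!
A monomial `x^d` lies outside an artinian monomial ideal `M` iff it divides a socle monomial
`x^c`: the monomials outside `M` form a finite order ideal, and its maximal elements are exactly
the socle monomials. Hence `x^{b-a} ∉ M` iff `b - a ≤ c` for some socle `c`, and for fixed `c`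
the cheapest such `a` is the positive part of `b - c`, of degree `degree⁺(b - c)`.
-/

section

variable {m : ℕ} {M : Set (Fin m → ℕ)}

lemma UpClosed.finite_compl (hup : UpClosed M) (hart : ArtinianMono M) : Mᶜ.Finite := by
  choose k hk using hart
  refine (Set.Finite.pi fun i => Set.finite_Iio (k i)).subset fun u hu i _ => ?_
  by_contra hki
  exact hu (hup _ (hk i) u fun j => by by_cases hji : j = i <;> simp_all)

lemma exists_mem_monSoc_le (hup : UpClosed M) (hart : ArtinianMono M) {d : Fin m → ℕ}
    (hd : d ∉ M) : ∃ c ∈ MonSoc M, d ≤ c := by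
  obtain ⟨c, hdc, hc⟩ := (hup.finite_compl hart).exists_le_maximal (Set.mem_compl hd)
  refine ⟨c, ⟨hc.prop, fun i => ?_⟩, hdc⟩
  by_contra hi
  have hle := hc.le_of_ge hi fun j => Nat.le_add_right (c j) _
  simpa using hle i

lemma degZ_zvec_tsub_eq_degP (b c : Fin m → ℕ) :
    degZ (zvec fun i => b i - c i) = degP (zvec b - zvec c) := by
  refine sum_congr rfl fun i _ => ?_
  simp only [zvec, Pi.sub_apply]
  omega

lemma degP_zvec_sub_le_degZ {a b c : Fin m → ℕ} (h : ∀ i, b i - a i ≤ c i) :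
    degP (zvec b - zvec c) ≤ degZ (zvec a) := by
  refine sum_le_sum fun i _ => ?_
  have := h i
  simp only [zvec, Pi.sub_apply]
  omega

end

theorem stmt0_general {m : ℕ} (M : Set (Fin m → ℕ)) (hup : UpClosed M) (hart : ArtinianMono M)
    (b : Fin m → ℕ) :
    sInf {d : ℤ | ∃ a : Fin m → ℕ, (∀ i, a i ≤ b i) ∧ (fun i => b i - a i) ∉ M ∧
        d = degZ (zvec a)} - 1
      = rnk M (zvec b) := by
  rw [rnk]
  congr 1
  apply csInf_eq_csInf_of_forall_exists_le
  · rintro _ ⟨a, -, hba, rfl⟩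
    obtain ⟨c, hc, hle⟩ := exists_mem_monSoc_le hup hart hba
    exact ⟨_, ⟨c, hc, rfl⟩, degP_zvec_sub_le_degZ hle⟩
  · rintro _ ⟨c, hc, rfl⟩
    have hbc : (fun i => b i - (b i - c i)) ∉ M := fun h =>
      hc.1 (hup _ h c fun i => by omega)
    exact ⟨_, ⟨_, fun i => Nat.sub_le _ _, hbc, rfl⟩, (degZ_zvec_tsub_eq_degP b c).le⟩

/-- the rank of a monomial, defined via ideal membership, equals
`min_{x^c ∈ MonSoc(M)} degree⁺(b - c) - 1`. -/
theorem stmt0 {m : ℕ} (M : Set (Fin m → ℕ)) (hup : UpClosed M) (hart : ArtinianMono M)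
    (hproper : (0 : Fin m → ℕ) ∉ M) (b : Fin m → ℕ) :
    sInf {d : ℤ | ∃ a : Fin m → ℕ, (∀ i, a i ≤ b i) ∧ (fun i => b i - a i) ∉ M ∧
        d = degZ (zvec a)} - 1
      = rnk M (zvec b) :=
  stmt0_general M hup hart b
end

section
/- Let M be an artinian monomial ideal in K[x_1,...,x_m] that is level (all socle monomials have the same total degree g−1, where g is called the genus) and reflection-invariant with canonical monomial x^K (i.e., the map x^c ↦ x^K/x^c is an involution on the set of socle monomials). Extend rank to all Laurent monomials x^b, b ∈ Z^m, by rank(x^b) := min over socle monomials x^c of degree^+(b−c) − 1. Then for every b ∈ Z^m: rank(x^b) − rank(x^{K−b}) = degree(x^b) − g + 1. -/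
open Finset

/-!
The reflection `x^c ↦ x^K / x^c` permutes the socle, and it sends `b - c` to `-(b - c)` on the
`K - b` side. Since `degree⁺(-w) = degree⁺(w) - degree(w)` and every socle monomial has degree
`g - 1`, each term `degree⁺(b - c)` of the minimum defining `rank(x^b)` is matched by a term
of the minimum for `rank(x^(K-b))` that is larger by exactly `g - 1 - degree(b)`. The socle must be
nonempty for this to say anything (`sInf ∅ = 0` in `ℤ`); artinianity guarantees it.
-/

lemma degZ_sub {m : ℕ} (v w : Fin m → ℤ) : degZ (v - w) = degZ v - degZ w := by
  simp only [degZ, Pi.sub_apply, Finset.sum_sub_distrib]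

lemma degP_nonneg {m : ℕ} (w : Fin m → ℤ) : 0 ≤ degP w :=
  Finset.sum_nonneg fun _ _ => le_max_right _ _

lemma degP_neg {m : ℕ} (w : Fin m → ℤ) : degP (-w) = degP w - degZ w := by
  simp only [degP, degZ, ← Finset.sum_sub_distrib, Pi.neg_apply]
  refine Finset.sum_congr rfl fun i _ => ?_
  omega

lemma zvec_tsub_of_le {m : ℕ} {K c : Fin m → ℕ} (h : ∀ i, c i ≤ K i) :
    zvec (fun i => K i - c i) = zvec K - zvec c := by
  funext i
  simp [zvec, Nat.cast_sub (h i)]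

section Socle

variable {m : ℕ} {M : Set (Fin m → ℕ)}

lemma UpClosed.lt_of_notMem (hup : UpClosed M) {i : Fin m} {k : ℕ}
    (hk : (fun j => if j = i then k else 0) ∈ M) {c : Fin m → ℕ} (hc : c ∉ M) : c i < k := by
  by_contra! hki
  refine hc (hup _ hk c fun j => ?_)
  by_cases hj : j = i
  · subst hj; simpa using hki
  · simp [hj]

/-- Since `M` is artinian, the monomials outside `M` form a finite box; one of maximal degree
is a socle monomial. -/
lemma monSoc_nonempty (hup : UpClosed M) (hart : ArtinianMono M) (hproper : (0 : Fin m → ℕ) ∉ M) :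
    (MonSoc M).Nonempty := by
  classical
  choose k hk using hart
  set outside := (Fintype.piFinset fun i => range (k i)).filter (· ∉ M)
  have mem_outside : ∀ c, c ∉ M → c ∈ outside := fun c hc =>
    mem_filter.2 ⟨Fintype.mem_piFinset.2 fun i => mem_range.2 (hup.lt_of_notMem (hk i) hc), hc⟩
  obtain ⟨c, hc, hmax⟩ := outside.exists_max_image (fun c => ∑ i, c i) ⟨0, mem_outside 0 hproper⟩
  refine ⟨c, (mem_filter.1 hc).2, fun i => ?_⟩
  by_contra hci
  have := hmax _ (mem_outside _ hci)
  simp [Finset.sum_add_distrib] at this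

lemma ReflInv.image_monSoc {K : Fin m → ℕ} (hrefl : ReflInv M K) :
    (fun c i => K i - c i) '' MonSoc M = MonSoc M := by
  refine (Set.image_subset_iff.2 fun c hc => ?_).antisymm fun c hc => ?_
  · exact (hrefl c hc).2
  · refine ⟨fun i => K i - c i, (hrefl c hc).2, funext fun i => ?_⟩
    exact Nat.sub_sub_self ((hrefl c hc).1 i)

lemma degP_reflect_sub {g : ℤ} {K c : Fin m → ℕ} (hlev : LevelOf M g) (hrefl : ReflInv M K)
    (hc : c ∈ MonSoc M) (b : Fin m → ℤ) :
    degP (zvec K - b - zvec (fun i => K i - c i)) = degP (b - zvec c) + (g - 1 - degZ b) := by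
  have hneg : zvec K - b - zvec (fun i => K i - c i) = -(b - zvec c) := by
    rw [zvec_tsub_of_le (hrefl c hc).1]
    abel
  rw [hneg, degP_neg, degZ_sub, hlev c hc]
  ring

lemma rnk_reflect {g : ℤ} {K : Fin m → ℕ} (hlev : LevelOf M g) (hrefl : ReflInv M K)
    (hne : (MonSoc M).Nonempty) (b : Fin m → ℤ) :
    rnk M (zvec K - b) = rnk M b + (g - 1 - degZ b) := by
  set values := (fun c => degP (b - zvec c)) '' MonSoc M
  have hvalues : (fun c => degP (zvec K - b - zvec c)) '' MonSoc M
      = OrderIso.addRight (g - 1 - degZ b) '' values := by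
    rw [← hrefl.image_monSoc, Set.image_image, Set.image_image]
    exact Set.image_congr fun c hc => degP_reflect_sub hlev hrefl hc b
  have hbdd : BddBelow values := ⟨0, Set.forall_mem_image.2 fun _ _ => degP_nonneg _⟩
  simp only [rnk]
  rw [hvalues, ← OrderIso.map_csInf' _ (hne.image _) hbdd, OrderIso.addRight_apply]
  ring

end Socle

/-- Riemann-Roch for artinian, level, reflection-invariant monomial ideals. -/
theorem stmt1 {m : ℕ} (M : Set (Fin m → ℕ)) (g : ℤ) (K : Fin m → ℕ)
    (hup : UpClosed M) (hart : ArtinianMono M) (hproper : (0 : Fin m → ℕ) ∉ M)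
    (hlev : LevelOf M g) (hrefl : ReflInv M K) (b : Fin m → ℤ) :
    rnk M b - rnk M (zvec K - b) = degZ b - g + 1 := by
  rw [rnk_reflect hlev hrefl (monSoc_nonempty hup hart hproper) b]
  ring
end

section
/- Let M be an artinian, reflection-invariant monomial ideal with canonical monomial x^K, and define genus_min(M) as one plus the minimum degree of a socle monomial and genus_max(M) as one plus the maximum degree of a socle monomial. Then for every Laurent monomial x^b: genus_min(M) − 1 ≤ degree(x^b) − rank(x^b) + rank(x^{K−b}) ≤ genus_max(M) − 1. -/
open Finset

lemma degP_sub_sub_degP_sub {m : ℕ} (u v : Fin m → ℤ) :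
    degP (u - v) - degP (v - u) = degZ u - degZ v := by
  simp only [degP, degZ, ← Finset.sum_sub_distrib]
  refine Finset.sum_congr rfl fun i _ => ?_
  simp only [Pi.sub_apply]
  rcases le_total (u i - v i) 0 with h | h
  · rw [max_eq_right h, max_eq_left (by omega)]; ring
  · rw [max_eq_left h, max_eq_right (by omega), sub_zero]

lemma zvec_tsub {m : ℕ} {c K : Fin m → ℕ} (hcK : ∀ i, c i ≤ K i) :
    zvec (fun i => K i - c i) = zvec K - zvec c := by
  funext i
  simp only [zvec, Pi.sub_apply]
  have := hcK i
  omega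

section Rank

variable {m : ℕ} {M : Set (Fin m → ℕ)}

lemma bddBelow_degP_sub_image (b : Fin m → ℤ) :
    BddBelow ((fun c => degP (b - zvec c)) '' MonSoc M) :=
  ⟨0, by rintro _ ⟨c, _, rfl⟩; exact degP_nonneg _⟩

lemma rnk_le (b : Fin m → ℤ) {c : Fin m → ℕ} (hc : c ∈ MonSoc M) :
    rnk M b ≤ degP (b - zvec c) - 1 :=
  sub_le_sub_right (csInf_le (bddBelow_degP_sub_image b) ⟨c, hc, rfl⟩) 1

lemma exists_rnk_eq (hne : (MonSoc M).Nonempty) (b : Fin m → ℤ) :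
    ∃ c ∈ MonSoc M, rnk M b = degP (b - zvec c) - 1 := by
  obtain ⟨c, hc, hmin⟩ := Int.csInf_mem (hne.image _) (bddBelow_degP_sub_image b)
  exact ⟨c, hc, by rw [rnk, ← hmin]⟩

variable {K : Fin m → ℕ}

lemma rnk_reflect_le (hrefl : ReflInv M K) (b : Fin m → ℤ) {c : Fin m → ℕ}
    (hc : c ∈ MonSoc M) : rnk M (zvec K - b) ≤ degP (zvec c - b) - 1 := by
  obtain ⟨hcK, hKc⟩ := hrefl c hc
  have h := rnk_le (zvec K - b) hKc
  rwa [zvec_tsub hcK, sub_sub_sub_cancel_left] at h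

lemma exists_rnk_reflect_eq (hrefl : ReflInv M K) (hne : (MonSoc M).Nonempty)
    (b : Fin m → ℤ) : ∃ c ∈ MonSoc M, rnk M (zvec K - b) = degP (zvec c - b) - 1 := by
  obtain ⟨c, hc, hrnk⟩ := exists_rnk_eq hne (zvec K - b)
  obtain ⟨hcK, hKc⟩ := hrefl c hc
  refine ⟨fun i => K i - c i, hKc, ?_⟩
  rw [hrnk, zvec_tsub hcK, sub_right_comm]

end Rank

theorem stmt2_general {m : ℕ} (M : Set (Fin m → ℕ)) (K : Fin m → ℕ) (gmin gmax : ℤ)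
    (hrefl : ReflInv M K)
    (hmin : IsLeast {d : ℤ | ∃ c ∈ MonSoc M, d = degZ (zvec c)} (gmin - 1))
    (hmax : IsGreatest {d : ℤ | ∃ c ∈ MonSoc M, d = degZ (zvec c)} (gmax - 1))
    (b : Fin m → ℤ) :
    gmin - 1 ≤ degZ b - rnk M b + rnk M (zvec K - b) ∧
      degZ b - rnk M b + rnk M (zvec K - b) ≤ gmax - 1 := by
  obtain ⟨c, hc, -⟩ := hmin.1
  have hne : (MonSoc M).Nonempty := ⟨c, hc⟩
  obtain ⟨c₀, hc₀, hrnk⟩ := exists_rnk_eq hne b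
  obtain ⟨c₁, hc₁, hrnk'⟩ := exists_rnk_reflect_eq hrefl hne b
  constructor
  · calc gmin - 1 ≤ degZ (zvec c₁) := hmin.2 ⟨c₁, hc₁, rfl⟩
      _ = degZ b - (degP (b - zvec c₁) - 1) + (degP (zvec c₁ - b) - 1) := by
        linarith [degP_sub_sub_degP_sub (zvec c₁) b]
      _ ≤ degZ b - rnk M b + rnk M (zvec K - b) := by
        rw [hrnk']; linarith [rnk_le b hc₁]
  · calc degZ b - rnk M b + rnk M (zvec K - b)
          ≤ degZ b - (degP (b - zvec c₀) - 1) + (degP (zvec c₀ - b) - 1) := by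
          rw [hrnk]; linarith [rnk_reflect_le hrefl b hc₀]
      _ = degZ (zvec c₀) := by linarith [degP_sub_sub_degP_sub (zvec c₀) b]
      _ ≤ gmax - 1 := hmax.2 ⟨c₀, hc₀, rfl⟩

/-- Riemann-Roch inequalities for artinian reflection-invariant monomial
ideals that need not be level. -/
theorem stmt2 {m : ℕ} (M : Set (Fin m → ℕ)) (K : Fin m → ℕ) (gmin gmax : ℤ)
    (hup : UpClosed M) (hart : ArtinianMono M) (hproper : (0 : Fin m → ℕ) ∉ M)
    (hrefl : ReflInv M K)
    (hmin : IsLeast {d : ℤ | ∃ c ∈ MonSoc M, d = degZ (zvec c)} (gmin - 1))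
    (hmax : IsGreatest {d : ℤ | ∃ c ∈ MonSoc M, d = degZ (zvec c)} (gmax - 1))
    (b : Fin m → ℤ) :
    gmin - 1 ≤ degZ b - rnk M b + rnk M (zvec K - b) ∧
      degZ b - rnk M b + rnk M (zvec K - b) ≤ gmax - 1 :=
  stmt2_general M K gmin gmax hrefl hmin hmax b
end

section
/- Fix x^K a monomial of degree 2g−2 and let 𝓜 be a nonempty set of monomials of degree g−1 each dividing x^K. Let S = 𝓜 ∪ {x^K/x^b : x^b ∈ 𝓜}, and let M be the intersection over x^c ∈ S of the irreducible monomial ideals ⟨x_1^{c_1+1},...,x_m^{c_m+1}⟩. Then M is an artinian monomial ideal whose socle monomials are exactly the elements of S, and M is level of genus g and reflection-invariant with canonical monomial x^K. -/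
/-!
The intersection of the irreducible ideals `⟨x_1^{c_1+1},…,x_m^{c_m+1}⟩`, `c ∈ S`, is the
complement of the order ideal generated by `S`; its socle monomials are the maximal elements
of `S`, hence all of `S` when `S` is an antichain. Monomials of one common degree form an
antichain, and `x^b ↦ x^K / x^b` preserves degree `g - 1` because `deg x^K = 2g - 2`, so it
permutes `S = 𝓜 ∪ x^K / 𝓜`.
-/

open Finset

variable {m : ℕ}

/-- The intersection of the irreducible ideals `⟨x_1^{c_1+1},…,x_m^{c_m+1}⟩` over `c ∈ S`. -/
def irredInter (S : Set (Fin m → ℕ)) : Set (Fin m → ℕ) :=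
  {w | ∀ c ∈ S, ∃ i, c i < w i}

lemma mem_irredInter {S : Set (Fin m → ℕ)} {w : Fin m → ℕ} :
    w ∈ irredInter S ↔ ∀ c ∈ S, ¬ w ≤ c := by
  simp [irredInter, Pi.le_def]

lemma upClosed_irredInter (S : Set (Fin m → ℕ)) : UpClosed (irredInter S) :=
  fun _ hu _ huv => mem_irredInter.2 fun c hc hvc =>
    mem_irredInter.1 hu c hc fun i => (huv i).trans (hvc i)

lemma artinianMono_irredInter {S : Set (Fin m → ℕ)} {K : Fin m → ℕ} (hK : ∀ c ∈ S, c ≤ K) :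
    ArtinianMono (irredInter S) :=
  fun i => ⟨K i + 1, fun c hc => ⟨i, by simpa using Nat.lt_succ_of_le (hK c hc i)⟩⟩

lemma shift_le_of_lt {c d : Fin m → ℕ} {i : Fin m} (hcd : c ≤ d) (hi : c i < d i) :
    (fun j => c j + if j = i then 1 else 0) ≤ d := by
  intro j
  by_cases hj : j = i
  · subst hj; simpa using hi
  · simpa [hj] using hcd j

lemma monSoc_irredInter_subset (S : Set (Fin m → ℕ)) : MonSoc (irredInter S) ⊆ S := by
  rintro c ⟨hc, hshift⟩
  obtain ⟨d, hd, hcd⟩ : ∃ d ∈ S, c ≤ d := by simpa [mem_irredInter] using hc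
  obtain rfl | hlt := hcd.eq_or_lt
  · exact hd
  · obtain ⟨i, hi⟩ := (Pi.lt_def.1 hlt).2
    exact absurd (shift_le_of_lt hcd hi) (mem_irredInter.1 (hshift i) d hd)

lemma subset_monSoc_irredInter {S : Set (Fin m → ℕ)} (hS : IsAntichain (· ≤ ·) S) :
    S ⊆ MonSoc (irredInter S) := by
  refine fun c hc => ⟨fun h => mem_irredInter.1 h c hc le_rfl, fun i => ?_⟩
  refine mem_irredInter.2 fun d hd hle => ?_
  have hcd : c ≤ d := fun j => (Nat.le_add_right _ _).trans (hle j)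
  have hne : c ≠ d := by
    rintro rfl
    simpa using hle i
  exact hS hc hd hne hcd

lemma monSoc_irredInter {S : Set (Fin m → ℕ)} (hS : IsAntichain (· ≤ ·) S) :
    MonSoc (irredInter S) = S :=
  (monSoc_irredInter_subset S).antisymm (subset_monSoc_irredInter hS)

lemma degZ_zvec (c : Fin m → ℕ) : degZ (zvec c) = ((∑ i, c i : ℕ) : ℤ) := by
  simp [degZ, zvec]

lemma isAntichain_of_degZ_eq {S : Set (Fin m → ℕ)} {d : ℤ}
    (hS : ∀ c ∈ S, degZ (zvec c) = d) : IsAntichain (· ≤ ·) S := by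
  intro c hc c' hc' hne hle
  have hsum : ∑ i, c i = ∑ i, c' i := by
    have := (hS c hc).trans (hS c' hc').symm
    rwa [degZ_zvec, degZ_zvec, Nat.cast_inj] at this
  refine hne (funext fun i => ?_)
  exact (sum_eq_sum_iff_of_le fun j _ => hle j).1 hsum i (mem_univ i)

lemma degZ_zvec_tsub {b K : Fin m → ℕ} (hb : b ≤ K) :
    degZ (zvec (fun i => K i - b i)) = degZ (zvec K) - degZ (zvec b) := by
  simp only [degZ, zvec, ← sum_sub_distrib]
  exact sum_congr rfl fun i _ => Int.ofNat_sub (hb i)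

theorem stmt7_general {m : ℕ} (g : ℤ) (K : Fin m → ℕ)
    (hK : degZ (zvec K) = 2 * g - 2)
    (𝓜 : Set (Fin m → ℕ))
    (h𝓜 : ∀ b ∈ 𝓜, degZ (zvec b) = g - 1 ∧ ∀ i, b i ≤ K i) :
    UpClosed {w : Fin m → ℕ | ∀ c ∈ 𝓜 ∪ ((fun b => fun i => K i - b i) '' 𝓜), ∃ i, c i < w i} ∧
    ArtinianMono {w : Fin m → ℕ | ∀ c ∈ 𝓜 ∪ ((fun b => fun i => K i - b i) '' 𝓜), ∃ i, c i < w i} ∧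
    MonSoc {w : Fin m → ℕ | ∀ c ∈ 𝓜 ∪ ((fun b => fun i => K i - b i) '' 𝓜), ∃ i, c i < w i}
      = 𝓜 ∪ ((fun b => fun i => K i - b i) '' 𝓜) ∧
    LevelOf {w : Fin m → ℕ | ∀ c ∈ 𝓜 ∪ ((fun b => fun i => K i - b i) '' 𝓜), ∃ i, c i < w i} g ∧
    ReflInv {w : Fin m → ℕ | ∀ c ∈ 𝓜 ∪ ((fun b => fun i => K i - b i) '' 𝓜), ∃ i, c i < w i} K := by
  set reflect : (Fin m → ℕ) → Fin m → ℕ := fun b i => K i - b i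
  set S := 𝓜 ∪ reflect '' 𝓜
  show UpClosed (irredInter S) ∧ ArtinianMono (irredInter S) ∧ MonSoc (irredInter S) = S ∧
    LevelOf (irredInter S) g ∧ ReflInv (irredInter S) K
  have hS : ∀ c ∈ S, degZ (zvec c) = g - 1 ∧ c ≤ K := by
    rintro c (hc | ⟨b, hb, rfl⟩)
    · exact h𝓜 c hc
    · refine ⟨?_, fun i => Nat.sub_le _ _⟩
      rw [degZ_zvec_tsub (h𝓜 b hb).2, hK, (h𝓜 b hb).1]
      ring
  have hreflect : ∀ c ∈ S, reflect c ∈ S := by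
    rintro c (hc | ⟨b, hb, rfl⟩)
    · exact Or.inr ⟨c, hc, rfl⟩
    · have hinv : reflect (reflect b) = b := funext fun i => Nat.sub_sub_self ((h𝓜 b hb).2 i)
      rw [hinv]
      exact Or.inl hb
  have hsoc : MonSoc (irredInter S) = S :=
    monSoc_irredInter (isAntichain_of_degZ_eq fun c hc => (hS c hc).1)
  refine ⟨upClosed_irredInter S, artinianMono_irredInter fun c hc => (hS c hc).2, hsoc,
    fun c hc => (hS c (hsoc ▸ hc)).1, fun c hc => ?_⟩
  rw [hsoc] at hc ⊢
  exact ⟨(hS c hc).2, hreflect c hc⟩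

/-- construction of all Riemann-Roch monomial ideals of genus `g`:
intersecting the irreducible ideals `⟨x_1^{c_1+1},…,x_m^{c_m+1}⟩` for `c` in
`𝓜 ∪ (K - 𝓜)` yields an artinian, level, reflection-invariant monomial ideal with
socle exactly `𝓜 ∪ (K - 𝓜)`. -/
theorem stmt7 {m : ℕ} (hm : 0 < m) (g : ℤ) (hg : 1 ≤ g) (K : Fin m → ℕ)
    (hK : degZ (zvec K) = 2 * g - 2)
    (𝓜 : Set (Fin m → ℕ)) (hne : 𝓜.Nonempty)
    (h𝓜 : ∀ b ∈ 𝓜, degZ (zvec b) = g - 1 ∧ ∀ i, b i ≤ K i) :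
    UpClosed {w : Fin m → ℕ | ∀ c ∈ 𝓜 ∪ ((fun b => fun i => K i - b i) '' 𝓜), ∃ i, c i < w i} ∧
    ArtinianMono {w : Fin m → ℕ | ∀ c ∈ 𝓜 ∪ ((fun b => fun i => K i - b i) '' 𝓜), ∃ i, c i < w i} ∧
    MonSoc {w : Fin m → ℕ | ∀ c ∈ 𝓜 ∪ ((fun b => fun i => K i - b i) '' 𝓜), ∃ i, c i < w i}
      = 𝓜 ∪ ((fun b => fun i => K i - b i) '' 𝓜) ∧
    LevelOf {w : Fin m → ℕ | ∀ c ∈ 𝓜 ∪ ((fun b => fun i => K i - b i) '' 𝓜), ∃ i, c i < w i} g ∧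
    ReflInv {w : Fin m → ℕ | ∀ c ∈ 𝓜 ∪ ((fun b => fun i => K i - b i) '' 𝓜), ∃ i, c i < w i} K :=
  stmt7_general g K hK 𝓜 h𝓜
end

section
/- Let G be a saturated connected loopless multigraph on n nodes (u_{ij} > 0 for all i ≠ j). For each complete flag 𝒯 : ∅ ⊂ T_1 ⊂ T_2 ⊂ ... ⊂ T_{n−1} = [n−1] of subsets of [n−1] (each inclusion adding one element), define s_𝒯 = lcm(x^{T_1→T̄_1},...,x^{T_{n−1}→T̄_{n−1}}) / (x_1 x_2 ··· x_{n−1}), where T̄_i = [n] \ T_i and x^{I→J} = Π_{i∈I} x_i^{Σ_{k∈J} u_{ik}}. Then every s_𝒯 has total degree e − n + 1, where e = Σ_{i<j} u_{ij} is the total number of edges of G. -/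
/-!
The exponent of `x_v` in the lcm is attained at the first stage `T_i` containing `v`, where it
counts the edges from `v` to the vertices entering the flag later, `n` included. Ordering the
vertices by entry time, every edge is counted exactly once, and the edge from `v` to `n`
makes each subtracted `1` genuine, so the degree is `e - (n - 1)`.
-/

open Finset

/-- The exponent vector of the socle monomial `s_𝒯` attached to a complete flag `T`:
`s_𝒯 = lcm(x^{T_1→T̄_1},…,x^{T_{n-1}→T̄_{n-1}}) / (x_1⋯x_{n-1})`.  The exponent of `x_v`
in `x^{T→T̄}` is `Σ_{k∈T̄} u_{vk}` if `v ∈ T` and `0` otherwise. -/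
def socExp (m : ℕ) (u : Fin (m + 1) → Fin (m + 1) → ℕ)
    (T : Fin (m + 1) → Finset (Fin (m + 1))) (v : Fin (m + 1)) : ℕ :=
  (Finset.univ.sup fun i : Fin (m + 1) => if v ∈ T i then ∑ k ∈ (T i)ᶜ, u v k else 0) - 1

section EntryTime

variable {α : Type*} [DecidableEq α] {n : ℕ}

/-- For a monotone `T`, the index of the first stage containing `v`, or `n` if there is none. -/
def entryTime (T : Fin n → Finset α) (v : α) : ℕ := #{j | v ∉ T j}

variable {T : Fin n → Finset α}

theorem entryTime_le (v : α) : entryTime T v ≤ n :=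
  (card_filter_le _ _).trans (card_fin n).le

theorem entryTime_eq_of_forall_notMem {v : α} (hv : ∀ i, v ∉ T i) : entryTime T v = n := by
  simp [entryTime, hv]

theorem mem_iff_entryTime_le (hT : Monotone T) {v : α} {i : Fin n} :
    v ∈ T i ↔ entryTime T v ≤ i := by
  constructor
  · intro hv
    calc entryTime T v ≤ #(Iio i) := card_le_card fun j hj => by
          simp only [mem_filter, mem_univ, true_and] at hj
          exact mem_Iio.2 (lt_of_not_ge fun hij => hj (hT hij hv))
      _ = i := Fin.card_Iio i
  · intro h
    by_contra hv
    have hsub : Iic i ⊆ ({j | v ∉ T j} : Finset (Fin n)) := fun j hj => by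
      simpa using fun hj' => hv (hT (mem_Iic.1 hj) hj')
    have := card_le_card hsub
    rw [Fin.card_Iic] at this
    unfold entryTime at h
    omega

theorem sup_ite_sum_compl_eq [Fintype α] (hT : Monotone T) (f : α → ℕ) (v : α) :
    (univ.sup fun i => if v ∈ T i then ∑ k ∈ (T i)ᶜ, f k else 0)
      = ∑ k with entryTime T v < entryTime T k, f k := by
  have hcompl (i : Fin n) : (T i)ᶜ = ({k | (i : ℕ) < entryTime T k} : Finset α) := by
    ext k; simp [mem_iff_entryTime_le hT]
  apply le_antisymm
  · refine Finset.sup_le fun i _ => ?_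
    split_ifs with hv
    · rw [hcompl]
      refine sum_le_sum_of_subset fun k hk => ?_
      simp only [mem_filter, mem_univ, true_and] at hk ⊢
      exact (mem_iff_entryTime_le hT).1 hv |>.trans_lt hk
    · exact Nat.zero_le _
  · rcases (entryTime_le (T := T) v).lt_or_eq with hlt | heq
    · have := le_sup (f := fun i => if v ∈ T i then ∑ k ∈ (T i)ᶜ, f k else 0)
        (mem_univ ⟨entryTime T v, hlt⟩)
      simpa [mem_iff_entryTime_le hT, hcompl] using this
    · have : ∀ k, ¬ entryTime T v < entryTime T k := fun k => by
        simpa [heq] using entryTime_le (T := T) k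
      simp [this]

theorem entryTime_injOn {T : Fin (n + 1) → Finset α} (hT : Monotone T)
    (hcard : ∀ i, #(T i) = i) : Set.InjOn (entryTime T) (T (Fin.last n)) := by
  intro v hv w hw hvw
  have hvn : entryTime T v ≤ n := by simpa using (mem_iff_entryTime_le hT).1 hv
  set i : Fin (n + 1) := ⟨entryTime T v, by omega⟩
  have hvi : v ∈ T i := (mem_iff_entryTime_le hT).2 le_rfl
  have hwi : w ∈ T i := (mem_iff_entryTime_le hT).2 hvw.ge
  have hi : 0 < entryTime T v := by
    by_contra h0
    have hT0 : T i = ∅ := card_eq_zero.1 (by rw [hcard]; simp [i]; omega)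
    simp [hT0] at hvi
  set p : Fin (n + 1) := ⟨entryTime T v - 1, by omega⟩
  have hvp : v ∉ T p := fun h => by have := (mem_iff_entryTime_le hT).1 h; simp [p] at this; omega
  have hwp : w ∉ T p := fun h => by have := (mem_iff_entryTime_le hT).1 h; simp [p] at this; omega
  have hstep : #(T i \ T p) = 1 := by
    rw [card_sdiff_of_subset (hT (show p ≤ i from Fin.le_def.2 (by simp [p, i]))), hcard, hcard]
    simp [p, i]; omega
  exact card_le_one.1 hstep.le v (mem_sdiff.2 ⟨hvi, hvp⟩) w (mem_sdiff.2 ⟨hwi, hwp⟩)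

end EntryTime

theorem sum_sum_ite_lt_comp_of_injective {α β M : Type*} [Fintype α] [LinearOrder α]
    [LinearOrder β] [AddCommMonoid M] {r : α → β} (hr : Function.Injective r)
    {f : α → α → M} (hf : ∀ x y, f x y = f y x) :
    ∑ x, ∑ y, (if r x < r y then f x y else 0) = ∑ x, ∑ y, if x < y then f x y else 0 := by
  -- sorting each pair by `<` maps the pairs ordered by `r` bijectively onto those ordered by `<`
  simp only [← Fintype.sum_prod_type', ← univ_product_univ]
  rw [← sum_filter, ← sum_filter]
  refine sum_nbij' (fun p => if p.1 < p.2 then p else p.swap)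
    (fun p => if r p.1 < r p.2 then p else p.swap) ?_ ?_ ?_ ?_ ?_
  all_goals
    rintro ⟨x, y⟩ h
    simp only [mem_filter, mem_product, mem_univ, true_and] at h ⊢
    have hxy : x ≠ y := by rintro rfl; exact lt_irrefl _ h
    have hrxy : r x ≠ r y := hr.ne hxy
    split_ifs <;> simp_all <;> order

section Flag

variable {n : ℕ} {T : Fin (n + 1) → Finset (Fin (n + 1))}

theorem mem_flag_last_iff (hcard : ∀ i, #(T i) = i) (hlast : ∀ i, Fin.last n ∉ T i)
    (v : Fin (n + 1)) : v ∈ T (Fin.last n) ↔ v ≠ Fin.last n := by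
  suffices T (Fin.last n) = {Fin.last n}ᶜ by simp [this]
  refine eq_of_subset_of_card_le (fun v hv => ?_) (by simp [hcard, card_compl])
  simpa using ne_of_mem_of_not_mem hv (hlast _)

theorem entryTime_lt_of_ne_last (hT : Monotone T) (hcard : ∀ i, #(T i) = i)
    (hlast : ∀ i, Fin.last n ∉ T i) {v : Fin (n + 1)} (hv : v ≠ Fin.last n) :
    entryTime T v < n + 1 :=
  Nat.lt_succ_of_le <| by
    simpa using (mem_iff_entryTime_le hT).1 ((mem_flag_last_iff hcard hlast v).2 hv)

theorem entryTime_injective_of_flag (hT : Monotone T) (hcard : ∀ i, #(T i) = i)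
    (hlast : ∀ i, Fin.last n ∉ T i) : Function.Injective (entryTime T) := by
  have hr_last : entryTime T (Fin.last n) = n + 1 := entryTime_eq_of_forall_notMem hlast
  intro v w hvw
  by_cases hv : v = Fin.last n <;> by_cases hw : w = Fin.last n
  · rw [hv, hw]
  · exact absurd hvw (by rw [hv, hr_last]; exact (entryTime_lt_of_ne_last hT hcard hlast hw).ne')
  · exact absurd hvw (by rw [hw, hr_last]; exact (entryTime_lt_of_ne_last hT hcard hlast hv).ne)
  · exact entryTime_injOn hT hcard ((mem_flag_last_iff hcard hlast v).2 hv)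
      ((mem_flag_last_iff hcard hlast w).2 hw) hvw

end Flag

theorem socExp_eq {m : ℕ} {u : Fin (m + 1) → Fin (m + 1) → ℕ}
    (hsat : ∀ i j, i ≠ j → 0 < u i j) {T : Fin (m + 1) → Finset (Fin (m + 1))}
    (hT : Monotone T) (hcard : ∀ i, #(T i) = i) (hlast : ∀ i, Fin.last m ∉ T i)
    (v : Fin (m + 1)) :
    (socExp m u T v : ℤ) = (∑ k, if entryTime T v < entryTime T k then (u v k : ℤ) else 0) - 1
      + if v = Fin.last m then 1 else 0 := by
  have hr_last : entryTime T (Fin.last m) = m + 1 := entryTime_eq_of_forall_notMem hlast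
  rw [socExp, sup_ite_sum_compl_eq hT]
  by_cases hv : v = Fin.last m
  · have : ∀ k, ¬ entryTime T (Fin.last m) < entryTime T k := fun k => by
      rw [hr_last]; exact Nat.not_lt.2 (entryTime_le k)
    simp [hv, this]
  · have hpos : 1 ≤ ∑ k with entryTime T v < entryTime T k, u v k :=
      (hsat v _ hv).trans_le (single_le_sum (fun _ _ => Nat.zero_le _)
        (by simpa [hr_last] using entryTime_lt_of_ne_last hT hcard hlast hv))
    rw [if_neg hv, Nat.cast_sub hpos, sum_filter]
    push_cast
    ring

theorem stmt11_general (m : ℕ) (u : Fin (m + 1) → Fin (m + 1) → ℕ)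
    (hsym : ∀ i j, u i j = u j i)
    (hsat : ∀ i j, i ≠ j → 0 < u i j)
    (T : Fin (m + 1) → Finset (Fin (m + 1)))
    (hmono : ∀ i j : Fin (m + 1), i ≤ j → T i ⊆ T j)
    (hcard : ∀ i : Fin (m + 1), (T i).card = i)
    (hlast : ∀ i, Fin.last m ∉ T i) :
    (∑ v, (socExp m u T v : ℤ))
      = (∑ i, ∑ j, if i < j then (u i j : ℤ) else 0) - (m + 1) + 1 := by
  have hT : Monotone T := hmono
  rw [sum_congr rfl fun v _ => socExp_eq hsat hT hcard hlast v, sum_add_distrib,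
    sum_sub_distrib, sum_sum_ite_lt_comp_of_injective (entryTime_injective_of_flag hT hcard hlast)
      fun i j => by rw [hsym]]
  simp

/-- for a saturated graph, the socle monomial `s_𝒯` of every complete flag
`𝒯` of subsets of `[n-1]` has total degree `e - n + 1` (here `n = m+1`). -/
theorem stmt11 (m : ℕ) (hm : 0 < m) (u : Fin (m + 1) → Fin (m + 1) → ℕ)
    (hsym : ∀ i j, u i j = u j i) (hdiag : ∀ i, u i i = 0)
    (hsat : ∀ i j, i ≠ j → 0 < u i j)
    (T : Fin (m + 1) → Finset (Fin (m + 1)))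
    (hmono : ∀ i j : Fin (m + 1), i ≤ j → T i ⊆ T j)
    (hcard : ∀ i : Fin (m + 1), (T i).card = i)
    (hlast : ∀ i, Fin.last m ∉ T i) :
    (∑ v, (socExp m u T v : ℤ))
      = (∑ i, ∑ j, if i < j then (u i j : ℤ) else 0) - (m + 1) + 1 :=
  stmt11_general m u hsym hsat T hmono hcard hlast
end

section
/- Let G be a saturated graph on n nodes and let 𝒯 ↦ φ(𝒯) be the involution on complete flags of [n−1] sending 𝒯 : T_1 ⊂ ... ⊂ T_{n−1} to the reverse flag T_{n−1}\T_{n−2} ⊂ T_{n−1}\T_{n−3} ⊂ ... ⊂ T_{n−1}\T_1 ⊂ T_{n−1}. Then s_{φ(𝒯)} = x^K / s_𝒯, where x^K = Π_{i=1}^{n−1} x_i^{d_i + u_{in} − 2} and d_i = Σ_{j≠i} u_{ij}. -/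
/-
For `v ≠ n`, let `T_a` be the first member of the flag containing `v`, so that `T_a = T_{a-1} ∪ {v}`.
The lcm defining `s_𝒯` is attained at `T_a`, giving exponent `u(v, T̄_a) - 1`. In the reverse flag
`v` first appears in `T_{n-1} \ T_{a-1}`, whose complement is `T_{a-1} ∪ {n}`, giving exponent
`u(v, T_{a-1}) + u_{vn} - 1`. As `u_{vv} = 0`, the two exponents add up to `d_v + u_{vn} - 2`.
-/

open Finset

/-- The exponent vector of the canonical monomial `x^K = Π_{i=1}^{n-1} x_i^{d_i+u_{in}-2}`. -/
def canExp (m : ℕ) (u : Fin (m + 1) → Fin (m + 1) → ℕ) (v : Fin (m + 1)) : ℕ :=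
  if v = Fin.last m then 0 else (∑ k, u v k) + u v (Fin.last m) - 2

lemma sup_ite_mem_sum_compl_eq {ι α : Type*} [Fintype ι] [Preorder ι] [Fintype α] [DecidableEq α]
    {S : ι → Finset α} (hS : Monotone S) (w : α → ℕ) {v : α} {a : ι}
    (ha : IsLeast {i | v ∈ S i} a) :
    univ.sup (fun i => if v ∈ S i then ∑ k ∈ (S i)ᶜ, w k else 0) = ∑ k ∈ (S a)ᶜ, w k := by
  refine le_antisymm (Finset.sup_le fun i _ => ?_) ?_
  · split_ifs with h
    · exact sum_le_sum_of_subset (compl_subset_compl.2 (hS (ha.2 h)))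
    · exact Nat.zero_le _
  · simpa [show v ∈ S a from ha.1] using
      le_sup (f := fun i => if v ∈ S i then ∑ k ∈ (S i)ᶜ, w k else 0) (mem_univ a)

section socExp

variable {m : ℕ} {u : Fin (m + 1) → Fin (m + 1) → ℕ} {S : Fin (m + 1) → Finset (Fin (m + 1))}
  {v : Fin (m + 1)}

lemma socExp_eq_of_isLeast (hS : Monotone S) {a : Fin (m + 1)} (ha : IsLeast {i | v ∈ S i} a) :
    socExp m u S v = ∑ k ∈ (S a)ᶜ, u v k - 1 := by
  rw [socExp, sup_ite_mem_sum_compl_eq hS _ ha]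

lemma socExp_eq_zero_of_forall_notMem (hv : ∀ i, v ∉ S i) : socExp m u S v = 0 := by
  simp [socExp, hv]

end socExp

section Flag

variable {m : ℕ} {T : Fin (m + 1) → Finset (Fin (m + 1))} {v : Fin (m + 1)}

lemma flag_last_eq_erase (hcard : ∀ i, (T i).card = i) (hlast : ∀ i, Fin.last m ∉ T i) :
    T (Fin.last m) = univ.erase (Fin.last m) := by
  refine eq_of_subset_of_card_le (fun k hk => mem_erase.2 ⟨?_, mem_univ k⟩) ?_
  · rintro rfl
    exact hlast _ hk
  · simp [hcard, card_erase_of_mem]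

lemma reverseFlag_compl_eq_insert (hcard : ∀ i, (T i).card = i)
    (hlast : ∀ i, Fin.last m ∉ T i) (i : Fin (m + 1)) :
    (T (Fin.last m) \ T i)ᶜ = insert (Fin.last m) (T i) := by
  ext k
  by_cases hk : k = Fin.last m <;> simp [flag_last_eq_erase hcard hlast, hk]

lemma exists_flag_step (hv : v ∈ T (Fin.last m)) (h0 : v ∉ T 0) :
    ∃ b : Fin m, v ∉ T b.castSucc ∧ v ∈ T b.succ := by
  by_contra! h
  exact Fin.induction (motive := fun i => v ∉ T i) h0 h (Fin.last m) hv

lemma reverseFlag_monotone (hmono : Monotone T) :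
    Monotone fun j => T (Fin.last m) \ T (Fin.last m - j) := fun i j hij => by
  simp only [Fin.last_sub]
  exact sdiff_subset_sdiff subset_rfl (hmono (Fin.rev_le_rev.2 hij))

variable (hmono : Monotone T) {b : Fin m} (hb : v ∉ T b.castSucc) (hb' : v ∈ T b.succ)
include hmono hb hb'

lemma flag_succ_eq_insert (hcard : ∀ i, (T i).card = i) : T b.succ = insert v (T b.castSucc) :=
  (eq_of_subset_of_card_le (insert_subset hb' (hmono (Fin.castSucc_le_succ b)))
    (by simp [card_insert_of_notMem hb, hcard])).symm

lemma flag_isLeast_of_step : IsLeast {i | v ∈ T i} b.succ :=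
  ⟨hb', fun _ hi => le_of_not_gt fun hlt => hb (hmono (Fin.le_castSucc_iff.2 hlt) hi)⟩

lemma reverseFlag_isLeast_of_step (hv : v ∈ T (Fin.last m)) :
    IsLeast {j | v ∈ T (Fin.last m) \ T (Fin.last m - j)} b.castSucc.rev := by
  simp only [Fin.last_sub]
  refine ⟨by simpa [hv] using hb, fun j hj => ?_⟩
  rw [Set.mem_ofPred_eq, mem_sdiff] at hj
  rw [← Fin.rev_le_rev, Fin.rev_rev, Fin.le_castSucc_iff]
  exact lt_of_not_ge fun hle => hj.2 (hmono hle hb')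

end Flag

theorem stmt12_general (m : ℕ) (u : Fin (m + 1) → Fin (m + 1) → ℕ)
    (hdiag : ∀ i, u i i = 0)
    (hsat : ∀ i j, i ≠ j → 0 < u i j)
    (T : Fin (m + 1) → Finset (Fin (m + 1)))
    (hmono : ∀ i j : Fin (m + 1), i ≤ j → T i ⊆ T j)
    (hcard : ∀ i : Fin (m + 1), (T i).card = i)
    (hlast : ∀ i, Fin.last m ∉ T i) :
    ∀ v : Fin (m + 1),
      socExp m u (fun j => T (Fin.last m) \ T (Fin.last m - j)) v + socExp m u T v
        = canExp m u v := by
  intro v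
  have hmono' : Monotone T := fun i j hij => hmono i j hij
  by_cases hv : v = Fin.last m
  · subst hv
    rw [socExp_eq_zero_of_forall_notMem fun i h => hlast _ (mem_sdiff.1 h).1,
      socExp_eq_zero_of_forall_notMem hlast]
    simp [canExp]
  have hvT : v ∈ T (Fin.last m) := by simp [flag_last_eq_erase hcard hlast, hv]
  have hT0 : T 0 = ∅ := card_eq_zero.1 (hcard 0)
  obtain ⟨b, hb, hb'⟩ := exists_flag_step hvT (by simp [hT0])
  rw [socExp_eq_of_isLeast (reverseFlag_monotone hmono')
      (reverseFlag_isLeast_of_step hmono' hb hb' hvT),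
    socExp_eq_of_isLeast hmono' (flag_isLeast_of_step hmono' hb hb'), canExp, if_neg hv,
    Fin.last_sub, Fin.rev_rev, reverseFlag_compl_eq_insert hcard hlast,
    sum_insert (hlast _), flag_succ_eq_insert hmono' hb hb' hcard]
  have hdegree := sum_add_sum_compl (insert v (T b.castSucc)) (u v)
  rw [sum_insert hb, hdiag, zero_add] at hdegree
  have hvlast : 1 ≤ u v (Fin.last m) := hsat v _ hv
  have hcompl_ge : u v (Fin.last m) ≤ ∑ k ∈ (insert v (T b.castSucc))ᶜ, u v k :=
    single_le_sum (fun _ _ => Nat.zero_le _)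
      (mem_compl.2 (flag_succ_eq_insert hmono' hb hb' hcard ▸ hlast _))
  omega

/-- for a saturated graph, the reverse flag `φ(𝒯)` with
`φ(𝒯)_j = T_{n-1} \ T_{n-1-j}` satisfies `s_{φ(𝒯)} = x^K / s_𝒯`, i.e.
`s_{φ(𝒯)} · s_𝒯 = x^K` as exponent vectors. -/
theorem stmt12 (m : ℕ) (hm : 0 < m) (u : Fin (m + 1) → Fin (m + 1) → ℕ)
    (hsym : ∀ i j, u i j = u j i) (hdiag : ∀ i, u i i = 0)
    (hsat : ∀ i j, i ≠ j → 0 < u i j)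
    (T : Fin (m + 1) → Finset (Fin (m + 1)))
    (hmono : ∀ i j : Fin (m + 1), i ≤ j → T i ⊆ T j)
    (hcard : ∀ i : Fin (m + 1), (T i).card = i)
    (hlast : ∀ i, Fin.last m ∉ T i) :
    ∀ v : Fin (m + 1),
      socExp m u (fun j => T (Fin.last m) \ T (Fin.last m - j)) v + socExp m u T v
        = canExp m u v :=
  stmt12_general m u hdiag hsat T hmono hcard hlast
end

section
/- Let G be a saturated graph on n nodes with e edges. Then the monomial ideal M_G ⊆ K[x_1,...,x_{n−1}] generated by the monomials x^{I→[n]\I} for all nonempty subsets I ⊆ [n−1] is artinian, level of genus e − n + 2, and reflection-invariant with canonical monomial x^K = Π_{i=1}^{n−1} x_i^{d_i + u_{in} − 2}. -/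
/-!
The socle monomials of `M_G` are exactly the monomials `x^{c_ρ}` attached to the total orders `ρ`
of the non-sink vertices, `c_ρ(v) = u(v, n) - 1 + Σ_{w before v} u(v, w)`. Choosing the
`ρ`-minimal vertex of `I` shows that no generator `x^{I→[n]\I}` divides `x^{c_ρ}`, while
repeatedly choosing a vertex of `S` at which `x^{S→[n]\S}` fails to divide `x^c` orders the
vertices so that `x^c` divides `x^{c_ρ}`. Summing `c_ρ` counts every edge between non-sink
vertices once, so `deg c_ρ = e - (n - 1)`; and `c_ρ(v) + c_{ρ reversed}(v)` counts every edge at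
`v` once, plus `u(v, n) - 2`.
-/

open Finset

/-- The parking-function monomial ideal `M_G = ⟨x^{I→[n]\I} : ∅ ≠ I ⊆ [n-1]⟩`, as the set
of exponent vectors of monomials lying in it (here `n = m+1`, and the variables correspond
to the first `m` nodes via `Fin.castSucc`). -/
def MGset (m : ℕ) (u : Fin (m + 1) → Fin (m + 1) → ℕ) : Set (Fin m → ℕ) :=
  {b | ∃ I : Finset (Fin m), I.Nonempty ∧ ∀ v : Fin m,
    (if v ∈ I then ∑ k ∈ (I.image Fin.castSucc)ᶜ, u v.castSucc k else 0) ≤ b v}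

section OrderSums

variable {ι α M : Type*} [Fintype ι] [LinearOrder α] [AddCommMonoid M]

theorem sum_filter_lt_add_sum_filter_gt_add {ρ : ι → α} (hρ : Function.Injective ρ)
    (f : ι → M) (v : ι) :
    ∑ w ∈ univ.filter (fun w => ρ w < ρ v), f w + ∑ w ∈ univ.filter (fun w => ρ v < ρ w), f w
      + f v = ∑ w, f w := by
  classical
  have hsplit :
      univ.filter (fun w => ¬ ρ w < ρ v) = insert v (univ.filter (fun w => ρ v < ρ w)) := by
    ext w
    simp only [mem_filter, mem_univ, true_and, mem_insert, not_lt, le_iff_lt_or_eq, hρ.eq_iff]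
    tauto
  rw [← sum_filter_add_sum_filter_not univ (fun w => ρ w < ρ v), hsplit,
    sum_insert (by simp), add_assoc, add_comm (f v)]

theorem two_mul_sum_sum_filter_lt {F : ι → ι → ℕ} (hF : ∀ v w, F v w = F w v)
    (hdiag : ∀ v, F v v = 0) {ρ : ι → α} (hρ : Function.Injective ρ) :
    2 * ∑ v, ∑ w ∈ univ.filter (fun w => ρ w < ρ v), F v w = ∑ v, ∑ w, F v w := by
  have hswap : ∑ v, ∑ w ∈ univ.filter (fun w => ρ w < ρ v), F v w
      = ∑ v, ∑ w ∈ univ.filter (fun w => ρ v < ρ w), F v w := by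
    simp only [sum_filter]
    rw [sum_comm]
    simp only [hF]
  rw [two_mul]
  nth_rewrite 2 [hswap]
  rw [← sum_add_distrib]
  refine sum_congr rfl fun v _ => ?_
  rw [← sum_filter_lt_add_sum_filter_gt_add hρ (F v) v, hdiag, add_zero]

theorem sum_sum_filter_lt_eq {β : Type*} [LinearOrder β] {F : ι → ι → ℕ}
    (hF : ∀ v w, F v w = F w v) (hdiag : ∀ v, F v v = 0)
    {ρ : ι → α} (hρ : Function.Injective ρ) {σ : ι → β} (hσ : Function.Injective σ) :
    ∑ v, ∑ w ∈ univ.filter (fun w => ρ w < ρ v), F v w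
      = ∑ v, ∑ w ∈ univ.filter (fun w => σ w < σ v), F v w := by
  have h₁ := two_mul_sum_sum_filter_lt hF hdiag hρ
  have h₂ := two_mul_sum_sum_filter_lt hF hdiag hσ
  omega

end OrderSums

theorem Fin.sum_compl_image_castSucc {m : ℕ} {M : Type*} [AddCommMonoid M]
    (f : Fin (m + 1) → M) (I : Finset (Fin m)) :
    ∑ k ∈ (I.image Fin.castSucc)ᶜ, f k = f (Fin.last m) + ∑ w ∈ Iᶜ, f w.castSucc := by
  rw [compl_eq_univ_sdiff, ← filter_notMem_eq_sdiff, sum_filter, Fin.sum_univ_castSucc,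
    compl_eq_univ_sdiff, ← filter_notMem_eq_sdiff, sum_filter, add_comm]
  simp [Fin.castSucc_ne_last]

theorem Fin.sum_sum_ite_lt_castSucc {m : ℕ} {M : Type*} [AddCommMonoid M]
    (f : Fin (m + 1) → Fin (m + 1) → M) :
    ∑ i, ∑ j, (if i < j then f i j else 0)
      = ∑ v : Fin m, ∑ w : Fin m, (if v < w then f v.castSucc w.castSucc else 0)
        + ∑ v : Fin m, f v.castSucc (Fin.last m) := by
  simp [Fin.sum_univ_castSucc, Fin.castSucc_lt_last, (Fin.le_last _).not_gt, sum_add_distrib]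

namespace MGset

variable {m : ℕ} (u : Fin (m + 1) → Fin (m + 1) → ℕ)

theorem mem_iff {b : Fin m → ℕ} :
    b ∈ MGset m u ↔ ∃ I : Finset (Fin m), I.Nonempty ∧
      ∀ v ∈ I, u v.castSucc (Fin.last m) + ∑ w ∈ Iᶜ, u v.castSucc w.castSucc ≤ b v := by
  refine exists_congr fun I => and_congr_right fun _ => forall_congr' fun v => ?_
  rw [Fin.sum_compl_image_castSucc]
  split_ifs with hv <;> simp [hv]

theorem upClosed : UpClosed (MGset m u) := by
  rintro b ⟨I, hI, hb⟩ b' hbb'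
  exact ⟨I, hI, fun v => (hb v).trans (hbb' v)⟩

theorem artinianMono : ArtinianMono (MGset m u) := by
  intro i
  refine ⟨u i.castSucc (Fin.last m) + ∑ w ∈ {i}ᶜ, u i.castSucc w.castSucc,
    (mem_iff u).2 ⟨{i}, singleton_nonempty i, fun v hv => ?_⟩⟩
  rw [mem_singleton.1 hv, if_pos rfl]

end MGset

def socleOfOrder {m : ℕ} (u : Fin (m + 1) → Fin (m + 1) → ℕ) {α : Type*} [LinearOrder α]
    (ρ : Fin m → α) (v : Fin m) : ℕ :=
  u v.castSucc (Fin.last m) - 1 + ∑ w ∈ univ.filter (fun w => ρ w < ρ v), u v.castSucc w.castSucc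

section SocleOfOrder

variable {m : ℕ} {u : Fin (m + 1) → Fin (m + 1) → ℕ} {α : Type*} [LinearOrder α]

theorem socleOfOrder_notMem (hsat : ∀ i j, i ≠ j → 0 < u i j) (ρ : Fin m → α) :
    socleOfOrder u ρ ∉ MGset m u := by
  intro h
  obtain ⟨I, hI, hmem⟩ := (MGset.mem_iff u).1 h
  obtain ⟨v, hvI, hmin⟩ := I.exists_min_image ρ hI
  have hpred : univ.filter (fun w => ρ w < ρ v) ⊆ Iᶜ := fun w hw =>
    mem_compl.2 fun hwI => (hmin w hwI).not_gt (mem_filter.1 hw).2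
  have hlast := hsat _ _ (Fin.castSucc_lt_last v).ne
  have := sum_le_sum_of_subset (f := fun w => u v.castSucc w.castSucc) hpred
  have := hmem v hvI
  simp only [socleOfOrder] at *
  omega

theorem socleOfOrder_add_single_mem (hsat : ∀ i j, i ≠ j → 0 < u i j) {ρ : Fin m → α}
    (hρ : Function.Injective ρ) (i : Fin m) :
    (fun j => socleOfOrder u ρ j + if j = i then 1 else 0) ∈ MGset m u := by
  refine (MGset.mem_iff u).2 ⟨univ.filter (fun w => ρ i ≤ ρ w), ⟨i, by simp⟩, fun v hv => ?_⟩
  have hcompl : (univ.filter (fun w => ρ i ≤ ρ w))ᶜ = univ.filter (fun w => ρ w < ρ i) := by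
    ext w; simp
  have hlast := hsat _ _ (Fin.castSucc_lt_last v).ne
  rw [hcompl]
  rcases eq_or_ne v i with rfl | hvi
  · simp only [socleOfOrder, if_true]
    omega
  · have hlt : ρ i < ρ v := (mem_filter.1 hv).2.lt_of_ne (hρ.ne hvi.symm)
    -- `v` also has `i` among its predecessors, which contributes `u(v, i) ≥ 1`
    have hsub :
        insert i (univ.filter (fun w => ρ w < ρ i)) ⊆ univ.filter (fun w => ρ w < ρ v) := by
      intro w hw
      simp only [mem_insert, mem_filter, mem_univ, true_and] at hw ⊢
      rcases hw with rfl | hw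
      exacts [hlt, hw.trans hlt]
    have := sum_le_sum_of_subset (f := fun w => u v.castSucc w.castSucc) hsub
    rw [sum_insert (by simp)] at this
    have := hsat _ _ ((Fin.castSucc_injective m).ne hvi)
    simp only [socleOfOrder, if_neg hvi]
    omega

theorem socleOfOrder_mem_monSoc (hsat : ∀ i j, i ≠ j → 0 < u i j) {ρ : Fin m → α}
    (hρ : Function.Injective ρ) : socleOfOrder u ρ ∈ MonSoc (MGset m u) :=
  ⟨socleOfOrder_notMem hsat ρ, socleOfOrder_add_single_mem hsat hρ⟩

theorem socleOfOrder_le_lex (ρ : Fin m → α) :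
    socleOfOrder u ρ ≤ socleOfOrder u (fun v => toLex (ρ v, v)) := fun v =>
  Nat.add_le_add_left (sum_le_sum_of_subset fun w hw => by
    simp only [mem_filter, mem_univ, true_and, Prod.Lex.toLex_lt_toLex] at hw ⊢
    exact Or.inl hw) _

-- The vertices outside `S` count as already placed, before all of `S`.
theorem exists_order_of_notMem {c : Fin m → ℕ} (hc : c ∉ MGset m u) (S : Finset (Fin m)) :
    ∃ ρ : Fin m → ℕ, ∀ v ∈ S, c v < u v.castSucc (Fin.last m) +
      ∑ w ∈ univ.filter (fun w => w ∉ S ∨ ρ w < ρ v), u v.castSucc w.castSucc := by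
  induction S using Finset.strongInduction with
  | _ S ih =>
  rcases S.eq_empty_or_nonempty with rfl | hS
  · exact ⟨0, by simp⟩
  -- the generator `x^{S → [n] \ S}` does not divide `x^c`
  obtain ⟨v, hvS, hv⟩ : ∃ v ∈ S, c v < u v.castSucc (Fin.last m) +
      ∑ w ∈ Sᶜ, u v.castSucc w.castSucc := by
    by_contra! h
    exact hc ((MGset.mem_iff u).2 ⟨S, hS, h⟩)
  obtain ⟨ρ, hρ⟩ := ih (S.erase v) (erase_ssubset hvS)
  refine ⟨Function.update (fun w => ρ w + 1) v 0, fun x hx => ?_⟩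
  rcases eq_or_ne x v with rfl | hxv
  · convert hv using 3
    ext w
    simp [Function.update_apply]
  · refine (hρ x (mem_erase.2 ⟨hxv, hx⟩)).trans_le
      (Nat.add_le_add_left (sum_le_sum_of_subset fun w hw => ?_) _)
    simp only [mem_filter, mem_univ, true_and, mem_erase, Function.update_apply, if_neg hxv]
      at hw ⊢
    split_ifs with hwv <;> grind

theorem exists_le_socleOfOrder_of_notMem (hsat : ∀ i j, i ≠ j → 0 < u i j) {c : Fin m → ℕ}
    (hc : c ∉ MGset m u) : ∃ ρ : Fin m → ℕ, c ≤ socleOfOrder u ρ := by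
  obtain ⟨ρ, hρ⟩ := exists_order_of_notMem hc univ
  refine ⟨ρ, fun v => ?_⟩
  have := hρ v (mem_univ v)
  have := hsat _ _ (Fin.castSucc_lt_last v).ne
  simp only [mem_univ, not_true_eq_false, false_or, socleOfOrder] at *
  omega

theorem exists_eq_socleOfOrder_of_mem_monSoc (hsat : ∀ i j, i ≠ j → 0 < u i j)
    {c : Fin m → ℕ} (hc : c ∈ MonSoc (MGset m u)) :
    ∃ ρ : Fin m → ℕ ×ₗ Fin m, Function.Injective ρ ∧ c = socleOfOrder u ρ := by
  obtain ⟨ρ, hρ⟩ := exists_le_socleOfOrder_of_notMem hsat hc.1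
  have hle := hρ.trans (socleOfOrder_le_lex ρ)
  refine ⟨_, fun _ _ h => congrArg Prod.snd (toLex.injective h),
    funext fun v => (hle v).antisymm (not_lt.1 fun hlt => ?_)⟩
  refine socleOfOrder_notMem hsat (fun v => toLex (ρ v, v))
    (MGset.upClosed u _ (hc.2 v) _ fun j => ?_)
  split_ifs with hj
  · exact hj ▸ hlt
  · simpa using hle j

theorem sum_socleOfOrder_add (hsym : ∀ i j, u i j = u j i) (hdiag : ∀ i, u i i = 0)
    (hsat : ∀ i j, i ≠ j → 0 < u i j) {ρ : Fin m → α} (hρ : Function.Injective ρ) :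
    ∑ v, socleOfOrder u ρ v + m = ∑ i, ∑ j, if i < j then u i j else 0 := by
  have hlast : ∑ v : Fin m, (u v.castSucc (Fin.last m) - 1) + m =
      ∑ v : Fin m, u v.castSucc (Fin.last m) :=
    calc _ = ∑ v : Fin m, (u v.castSucc (Fin.last m) - 1 + 1) := by simp [sum_add_distrib]
      _ = _ := sum_congr rfl fun v _ => Nat.sub_add_cancel (hsat _ _ (Fin.castSucc_lt_last v).ne)
  -- the edges among the non-sink vertices, counted along `ρ` and along the order of `Fin m`
  have hinner := sum_sum_filter_lt_eq (F := fun v w : Fin m => u v.castSucc w.castSucc)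
    (fun v w => hsym _ _) (fun v => hdiag _) hρ (σ := OrderDual.toDual) OrderDual.toDual.injective
  simp only [OrderDual.toDual_lt_toDual, sum_filter] at hinner
  rw [Fin.sum_sum_ite_lt_castSucc, ← hinner, ← hlast]
  simp only [socleOfOrder, sum_add_distrib, sum_filter]
  ring

theorem socleOfOrder_add_socleOfOrder_toDual (hdiag : ∀ i, u i i = 0)
    (hsat : ∀ i j, i ≠ j → 0 < u i j) {ρ : Fin m → α} (hρ : Function.Injective ρ) (v : Fin m) :
    socleOfOrder u ρ v + socleOfOrder u (fun w => OrderDual.toDual (ρ w)) v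
      = ∑ k, u v.castSucc k + u v.castSucc (Fin.last m) - 2 := by
  have hsplit := sum_filter_lt_add_sum_filter_gt_add hρ (fun w => u v.castSucc w.castSucc) v
  have hlast := hsat _ _ (Fin.castSucc_lt_last v).ne
  simp only [socleOfOrder, OrderDual.toDual_lt_toDual, Fin.sum_univ_castSucc, hdiag] at hsplit ⊢
  omega

end SocleOfOrder

theorem stmt13_general (m : ℕ) (u : Fin (m + 1) → Fin (m + 1) → ℕ)
    (hsym : ∀ i j, u i j = u j i) (hdiag : ∀ i, u i i = 0)
    (hsat : ∀ i j, i ≠ j → 0 < u i j) :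
    ArtinianMono (MGset m u) ∧
    LevelOf (MGset m u)
      ((∑ i, ∑ j, if i < j then (u i j : ℤ) else 0) - (m + 1) + 2) ∧
    ReflInv (MGset m u)
      (fun v => (∑ k, u v.castSucc k) + u v.castSucc (Fin.last m) - 2) := by
  refine ⟨MGset.artinianMono u, fun c hc => ?_, fun c hc => ?_⟩
  · obtain ⟨ρ, hρ, rfl⟩ := exists_eq_socleOfOrder_of_mem_monSoc hsat hc
    have hdeg := congrArg (Nat.cast : ℕ → ℤ) (sum_socleOfOrder_add hsym hdiag hsat hρ)
    push_cast at hdeg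
    simp only [degZ, zvec]
    linarith
  · obtain ⟨ρ, hρ, rfl⟩ := exists_eq_socleOfOrder_of_mem_monSoc hsat hc
    have hK := socleOfOrder_add_socleOfOrder_toDual hdiag hsat hρ
    refine ⟨fun v => by simp only [← hK v, Nat.le_add_right], ?_⟩
    convert socleOfOrder_mem_monSoc (ρ := fun w => OrderDual.toDual (ρ w)) hsat
      (OrderDual.toDual.injective.comp hρ) using 1
    funext v
    simp only [← hK v, Nat.add_sub_cancel_left]

/-- for a saturated graph `G` on `n = m+1` nodes with `e` edges, the ideal
`M_G` is artinian, level of genus `e - n + 2`, and reflection-invariant with canonical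
monomial `x^K = Π_{i=1}^{n-1} x_i^{d_i + u_{in} - 2}`. -/
theorem stmt13 (m : ℕ) (hm : 0 < m) (u : Fin (m + 1) → Fin (m + 1) → ℕ)
    (hsym : ∀ i j, u i j = u j i) (hdiag : ∀ i, u i i = 0)
    (hsat : ∀ i j, i ≠ j → 0 < u i j) :
    ArtinianMono (MGset m u) ∧
    LevelOf (MGset m u)
      ((∑ i, ∑ j, if i < j then (u i j : ℤ) else 0) - (m + 1) + 2) ∧
    ReflInv (MGset m u)
      (fun v => (∑ k, u v.castSucc k) + u v.castSucc (Fin.last m) - 2) :=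
  stmt13_general m u hsym hdiag hsat
end
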